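/- arXiv:2209.05119 — 2 statements merged into one kernel-verified Lean document; each statement's English description precedes it below -/
import Mathlib

section
/- In the linear case h(i) = q·i + r (where q ≥ 2, r ∈ {0,...,q-1}, p > q(s-1) + r, s ≥ 2): for any n ≥ 1, b_{sn+s-1} < b_{sn+s-2} < ... < b_{sn+1} < b_n ≤ b_{sn}, and b_{sn} = b_n if and only if r = 0. More generally, for any 0 ≤ ℓ < k and s-ary digits ε_k...ε_{ℓ+1} with ε_k ≠ 0, the quantity b_{[ε_k ... ε_{ℓ+1} ε_ℓ (s-1)^ℓ]_s} is strictly decreasing in ε_ℓ ∈ {0,...,s-1}. -/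
open Real Filter Set MeasureTheory Topology
open scoped Classical ENNReal

/-- The Cantor-integer function: apply the digit map `h` to the `s`-ary digits of `n`
and read the result in base `p`. -/
def cantorInt (p s : ℕ) (h : ℕ → ℕ) (n : ℕ) : ℕ :=
  (Nat.digits s n).foldr (fun d acc => h d + p * acc) 0

/-- `b n = a n / n ^ (log_s p)`. -/
noncomputable def cantorB (p s : ℕ) (h : ℕ → ℕ) (n : ℕ) : ℝ :=
  (cantorInt p s h n : ℝ) / (n : ℝ) ^ Real.logb s p

/-- `a(x) = a_⌊x⌋`. -/
noncomputable def cantorA (p s : ℕ) (h : ℕ → ℕ) (x : ℝ) : ℝ :=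
  (cantorInt p s h ⌊x⌋₊ : ℝ)

/-- `b_n` in the linear case `h(i) = q·i + r`. -/
noncomputable def linB (p q s r : ℕ) (n : ℕ) : ℝ :=
  cantorB p s (fun i => q * i + r) n

/-! Reading digits through `h` gives `a_{sn+d} = h(d) + p a_n`, and
`(sn)^{log_s p} = p n^{log_s p}`; hence `b_n = p a_n / (sn)^{log_s p}` and
`b_{sn} = b_n + r / (sn)^{log_s p}`. Since `log_s p ≥ 1`, for `N ≤ M` the inequality
`b_M < b_N` follows from `a_M / M < a_N / N`. Raising the digit in position `ℓ` of
`N = [K (s-1)^ℓ]_s` by one adds `s^ℓ` to the argument but only `q p^ℓ` to `a_N ≥ p^ℓ a_K`,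
so the ratio drops as soon as `a_K ≥ q (K + 1)`, which holds once `K ≥ s`. The inequality
`b_{sn+1} < b_n` is the same comparison against `p a_n / (sn)^{log_s p}`, using
`(q + r) s < p q`. -/

section CantorInt

variable {p s : ℕ} {h : ℕ → ℕ}

lemma cantorInt_mul_add (hs : 2 ≤ s) (n : ℕ) {d : ℕ} (hd : d < s) (hnd : s * n + d ≠ 0) :
    cantorInt p s h (s * n + d) = h d + p * cantorInt p s h n := by
  rw [cantorInt, Nat.digits_def' (by omega) (Nat.pos_of_ne_zero hnd), Nat.mul_add_div (by omega),
    Nat.mul_add_mod, Nat.mod_eq_of_lt hd, Nat.div_eq_of_lt hd, add_zero, List.foldr_cons]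
  rfl

lemma cantorInt_pow_mul_add_pow_sub_one (hs : 2 ≤ s) (K ℓ : ℕ) :
    cantorInt p s h (s ^ ℓ * K + (s ^ ℓ - 1)) =
      p ^ ℓ * cantorInt p s h K + cantorInt p s h (s ^ ℓ - 1) := by
  induction ℓ with
  | zero => simp [cantorInt]
  | succ ℓ ih =>
    have hpow : 1 ≤ s ^ ℓ := Nat.one_le_pow _ _ (by omega)
    have hsplit : ∀ x, s ^ (ℓ + 1) * x + (s ^ (ℓ + 1) - 1) =
        s * (s ^ ℓ * x + (s ^ ℓ - 1)) + (s - 1) := fun x => by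
      zify [hpow, Nat.one_le_pow (ℓ + 1) s (by omega), (by omega : 1 ≤ s)]
      ring
    have h0 : s ^ (ℓ + 1) * 0 + (s ^ (ℓ + 1) - 1) = s ^ (ℓ + 1) - 1 := by simp
    rw [hsplit, cantorInt_mul_add hs _ (by omega) (by omega), ih, ← h0, hsplit,
      cantorInt_mul_add hs _ (by omega) (by omega)]
    simp only [mul_zero, zero_add]
    ring

lemma mul_le_cantorInt {q : ℕ} (hs : 2 ≤ s) (hsp : s ≤ p) (hh : ∀ d < s, q * d ≤ h d)
    (n : ℕ) : q * n ≤ cantorInt p s h n := by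
  induction n using Nat.strong_induction_on with
  | _ n ih =>
    rcases Nat.eq_zero_or_pos n with rfl | hn
    · simp
    have hd : n % s < s := Nat.mod_lt _ (by omega)
    have hstep := cantorInt_mul_add (p := p) (h := h) hs (n / s) hd (by rw [Nat.div_add_mod]; omega)
    rw [Nat.div_add_mod] at hstep
    have hrec : s * (q * (n / s)) ≤ p * cantorInt p s h (n / s) :=
      Nat.mul_le_mul hsp (ih _ (Nat.div_lt_self hn (by omega)))
    have hd' := hh _ hd
    calc q * n = q * (n % s) + s * (q * (n / s)) := by
          conv_lhs => rw [← Nat.mod_add_div n s]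
          ring
      _ ≤ cantorInt p s h n := by omega

end CantorInt

lemma div_rpow_lt_div_rpow_of_mul_lt {α A B M N : ℝ} (hα : 1 ≤ α) (hN : 0 < N)
    (hNM : N ≤ M) (hB : 0 ≤ B) (h : B * N < A * M) : B / M ^ α < A / N ^ α := by
  have hM : 0 < M := hN.trans_le hNM
  have hAM : 0 ≤ A * M := (mul_nonneg hB hN.le).trans h.le
  have hsplit : ∀ {x : ℝ}, 0 < x → x ^ α = x * x ^ (α - 1) := fun hx => by
    rw [← Real.rpow_one_add' hx.le (by linarith), add_sub_cancel]
  rw [div_lt_div_iff₀ (by positivity) (by positivity)]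
  calc B * N ^ α = B * N * N ^ (α - 1) := by rw [hsplit hN]; ring
    _ < A * M * N ^ (α - 1) := mul_lt_mul_of_pos_right h (by positivity)
    _ ≤ A * M * M ^ (α - 1) := by gcongr
    _ = A * M ^ α := by rw [hsplit hM]; ring

section CantorB

variable {p s : ℕ} {h : ℕ → ℕ}

lemma one_le_logb_of_le (hs : 2 ≤ s) (hsp : s ≤ p) : 1 ≤ logb s p := by
  rw [le_logb_iff_rpow_le (by exact_mod_cast hs) (by norm_cast; omega), Real.rpow_one]
  exact_mod_cast hsp

lemma natCast_mul_rpow_logb (hs : 2 ≤ s) (hp : 0 < p) (n : ℕ) :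
    ((s * n : ℕ) : ℝ) ^ logb s p = p * (n : ℝ) ^ logb s p := by
  push_cast
  rw [Real.mul_rpow (by positivity) (by positivity),
    Real.rpow_logb (by norm_cast; omega) (by norm_cast; omega) (by exact_mod_cast hp)]

lemma cantorB_lt_of_mul_lt (hs : 2 ≤ s) (hsp : s ≤ p) {M N : ℕ} (hN : 0 < N) (hNM : N ≤ M)
    (hlt : cantorInt p s h M * N < cantorInt p s h N * M) :
    cantorB p s h M < cantorB p s h N :=
  div_rpow_lt_div_rpow_of_mul_lt (one_le_logb_of_le hs hsp) (by exact_mod_cast hN)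
    (by exact_mod_cast hNM) (by positivity) (by exact_mod_cast hlt)

lemma cantorB_eq_div_natCast_mul_rpow (hs : 2 ≤ s) (hp : 0 < p) {n : ℕ} (hn : n ≠ 0) :
    cantorB p s h n = p * cantorInt p s h n / ((s * n : ℕ) : ℝ) ^ logb s p := by
  have : (0 : ℝ) < (n : ℝ) ^ logb s p := by positivity
  rw [natCast_mul_rpow_logb hs hp, cantorB]
  field_simp

lemma cantorB_mul (hs : 2 ≤ s) (hp : 0 < p) {n : ℕ} (hn : n ≠ 0) :
    cantorB p s h (s * n) = cantorB p s h n + h 0 / ((s * n : ℕ) : ℝ) ^ logb s p := by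
  rw [cantorB_eq_div_natCast_mul_rpow hs hp hn, cantorB, ← add_zero (s * n),
    cantorInt_mul_add hs n (by omega) (by rw [add_zero]; exact mul_ne_zero (by omega) hn)]
  push_cast
  ring

lemma cantorB_mul_add_one_lt (hs : 2 ≤ s) (hsp : s ≤ p) {n : ℕ} (hn : n ≠ 0)
    (h1 : h 1 * (s * n) < p * cantorInt p s h n) : cantorB p s h (s * n + 1) < cantorB p s h n := by
  rw [cantorB_eq_div_natCast_mul_rpow (h := h) hs (by omega) hn, cantorB,
    cantorInt_mul_add hs n (by omega) (by omega)]
  refine div_rpow_lt_div_rpow_of_mul_lt (one_le_logb_of_le hs hsp) (by positivity)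
    (by push_cast; linarith) (by positivity) ?_
  have : (h 1 + p * cantorInt p s h n) * (s * n) < p * cantorInt p s h n * (s * n + 1) := by
    nlinarith
  exact_mod_cast this

end CantorB

section Linear

variable {p q s r : ℕ}

lemma lt_of_mul_sub_one_add_lt (hs : 2 ≤ s) (hq : 2 ≤ q) (hp : q * (s - 1) + r < p) :
    s < p := by
  have : 2 * (s - 1) ≤ q * (s - 1) := Nat.mul_le_mul_right _ hq
  omega

lemma add_mul_lt_mul_of_mul_sub_one_add_lt (hs : 2 ≤ s) (hq : 2 ≤ q) (hr : r < q)
    (hp : q * (s - 1) + r < p) : (q + r) * s < p * q := by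
  obtain ⟨t, rfl⟩ : ∃ t, s = t + 1 := ⟨s - 1, by omega⟩
  simp only [Nat.add_sub_cancel] at hp
  have hpq : (q * t + r + 1) * q ≤ p * q := Nat.mul_le_mul_right q hp
  have hqq : t * (q + r + 1) ≤ t * (q * q) := Nat.mul_le_mul_left t (by nlinarith)
  nlinarith

lemma cantorInt_linear_succ (hs : 2 ≤ s) {K : ℕ} (hK : K ≠ 0) (he : K % s + 1 < s) :
    cantorInt p s (fun i => q * i + r) (K + 1) = cantorInt p s (fun i => q * i + r) K + q := by
  have hlast := cantorInt_mul_add (p := p) (h := fun i => q * i + r) hs (K / s)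
    (Nat.mod_lt K (by omega)) (by rwa [Nat.div_add_mod])
  have hsucc := cantorInt_mul_add (p := p) (h := fun i => q * i + r) hs (K / s) he (by omega)
  rw [Nat.div_add_mod] at hlast
  rw [← add_assoc, Nat.div_add_mod] at hsucc
  rw [hsucc, hlast]
  ring

lemma mul_succ_le_cantorInt_linear (hs : 2 ≤ s) (hsp : s < p) {K : ℕ} (hK : s ≤ K) :
    q * (K + 1) ≤ cantorInt p s (fun i => q * i + r) K := by
  have hm : 1 ≤ K / s := (Nat.one_le_div_iff (by omega)).2 hK
  have hstep := cantorInt_mul_add (p := p) (h := fun i => q * i + r) hs (K / s)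
    (Nat.mod_lt K (by omega)) (by rw [Nat.div_add_mod]; omega)
  rw [Nat.div_add_mod] at hstep
  have hlow : p * (q * (K / s)) ≤ p * cantorInt p s (fun i => q * i + r) (K / s) :=
    Nat.mul_le_mul_left _ (mul_le_cantorInt hs hsp.le (fun d _ => Nat.le_add_right _ _) _)
  have hsp' : (s + 1) * (q * (K / s)) ≤ p * (q * (K / s)) := Nat.mul_le_mul_right _ hsp
  calc q * (K + 1) = q * (K % s) + (s * (q * (K / s)) + q) := by
        conv_lhs => rw [← Nat.mod_add_div K s]
        ring
    _ ≤ q * (K % s) + (s + 1) * (q * (K / s)) := by nlinarith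
    _ ≤ cantorInt p s (fun i => q * i + r) K := by rw [hstep]; nlinarith

lemma linB_pow_mul_succ_lt (hs : 2 ≤ s) (hq : 0 < q) (hsp : s < p) (ℓ : ℕ) {K : ℕ}
    (hK : s ≤ K) (he : K % s + 1 < s) :
    linB p q s r (s ^ ℓ * (K + 1) + (s ^ ℓ - 1)) <
      linB p q s r (s ^ ℓ * K + (s ^ ℓ - 1)) := by
  set a := cantorInt p s (fun i => q * i + r)
  set N := s ^ ℓ * K + (s ^ ℓ - 1)
  have hM : s ^ ℓ * (K + 1) + (s ^ ℓ - 1) = N + s ^ ℓ := by simp only [N]; ring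
  have hN : N < s ^ ℓ * (K + 1) := by
    have : 0 < s ^ ℓ := by positivity
    simp only [N]; rw [mul_add]; omega
  have haN : p ^ ℓ * a K ≤ a N := by
    simp only [a, N, cantorInt_pow_mul_add_pow_sub_one hs]; omega
  have haM : a (N + s ^ ℓ) = a N + q * p ^ ℓ := by
    simp only [a, N, ← hM, cantorInt_pow_mul_add_pow_sub_one hs,
      cantorInt_linear_succ hs (by omega) he]
    ring
  rw [hM]
  have hN0 : 0 < N := Nat.add_pos_left (Nat.mul_pos (by positivity) (by omega)) _
  refine cantorB_lt_of_mul_lt hs hsp.le hN0 (Nat.le_add_right _ _) ?_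
  change a _ * N < a N * _
  rw [haM]
  have key : q * p ^ ℓ * N < a N * s ^ ℓ :=
    calc q * p ^ ℓ * N < q * p ^ ℓ * (s ^ ℓ * (K + 1)) :=
          Nat.mul_lt_mul_of_pos_left hN (Nat.mul_pos hq (pow_pos (by omega) ℓ))
      _ = p ^ ℓ * (q * (K + 1)) * s ^ ℓ := by ring
      _ ≤ a N * s ^ ℓ := by
          gcongr
          exact (Nat.mul_le_mul_left _ (mul_succ_le_cantorInt_linear hs hsp hK)).trans haN
  nlinarith

lemma linB_strictAntiOn_digit (hs : 2 ≤ s) (hq : 0 < q) (hsp : s < p) (ℓ : ℕ)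
    {m : ℕ} (hm : 1 ≤ m) :
    StrictAntiOn (fun e => linB p q s r (s ^ ℓ * (s * m + e) + (s ^ ℓ - 1)))
      (Set.Iic (s - 1)) :=
  strictAntiOn_Iic_of_succ_lt fun e he => by
    simp only [Order.succ_eq_add_one, ← add_assoc]
    refine linB_pow_mul_succ_lt hs hq hsp ℓ (by nlinarith) ?_
    rw [Nat.mul_add_mod, Nat.mod_eq_of_lt (by omega)]
    omega

end Linear

lemma exists_sum_Icc_mul_pow_eq {s ℓ k : ℕ} (hs : 0 < s) (hℓk : ℓ < k) {ε : ℕ → ℕ}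
    (hεk : 1 ≤ ε k) :
    ∃ m, 1 ≤ m ∧ ∑ i ∈ Finset.Icc (ℓ + 1) k, ε i * s ^ i = s ^ (ℓ + 1) * m := by
  obtain ⟨m, hm⟩ : s ^ (ℓ + 1) ∣ ∑ i ∈ Finset.Icc (ℓ + 1) k, ε i * s ^ i :=
    Finset.dvd_sum fun i hi => dvd_mul_of_dvd_right (pow_dvd_pow s (Finset.mem_Icc.1 hi).1) _
  refine ⟨m, Nat.one_le_iff_ne_zero.2 fun hm0 => ?_, hm⟩
  have hle : ε k * s ^ k ≤ ∑ i ∈ Finset.Icc (ℓ + 1) k, ε i * s ^ i :=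
    Finset.single_le_sum (f := fun i => ε i * s ^ i) (fun _ _ => Nat.zero_le _)
      (Finset.mem_Icc.2 ⟨hℓk, le_rfl⟩)
  rw [hm, hm0, mul_zero] at hle
  have : 0 < ε k * s ^ k := Nat.mul_pos hεk (pow_pos hs k)
  omega

theorem stmt17 (p q s r : ℕ) (hs : 2 ≤ s) (hq : 2 ≤ q) (hr : r < q)
    (hp : q * (s - 1) + r < p) :
    (∀ n : ℕ, 1 ≤ n →
      (∀ i : ℕ, 1 ≤ i → i + 1 ≤ s - 1 →
        linB p q s r (s * n + i + 1) < linB p q s r (s * n + i)) ∧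
      linB p q s r (s * n + 1) < linB p q s r n ∧
      linB p q s r n ≤ linB p q s r (s * n) ∧
      (linB p q s r (s * n) = linB p q s r n ↔ r = 0)) ∧
    (∀ k ℓ : ℕ, ℓ < k → ∀ ε : ℕ → ℕ, (∀ i, ε i < s) → 1 ≤ ε k →
      ∀ e₁ e₂ : ℕ, e₁ < e₂ → e₂ < s →
        linB p q s r ((∑ i ∈ Finset.Icc (ℓ + 1) k, ε i * s ^ i) + e₂ * s ^ ℓ + (s ^ ℓ - 1)) <
        linB p q s r ((∑ i ∈ Finset.Icc (ℓ + 1) k, ε i * s ^ i) + e₁ * s ^ ℓ + (s ^ ℓ - 1))) := by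
  have hsp := lt_of_mul_sub_one_add_lt hs hq hp
  refine ⟨fun n hn => ⟨fun i hi hi' => ?_, ?_, ?_⟩, fun k ℓ hℓk ε _ hεk e₁ e₂ h12 h2s => ?_⟩
  · have hmod : (s * n + i) % s = i := by rw [Nat.mul_add_mod, Nat.mod_eq_of_lt (by omega)]
    simpa using linB_pow_mul_succ_lt (r := r) hs (by omega) hsp 0 (K := s * n + i)
      (by nlinarith) (by omega)
  · refine cantorB_mul_add_one_lt hs hsp.le (by omega) ?_
    calc (q * 1 + r) * (s * n) = (q + r) * s * n := by ring
      _ < p * q * n := Nat.mul_lt_mul_of_pos_right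
          (add_mul_lt_mul_of_mul_sub_one_add_lt hs hq hr hp) hn
      _ ≤ p * cantorInt p s (fun i => q * i + r) n := by
          rw [mul_assoc]
          exact Nat.mul_le_mul_left _
            (mul_le_cantorInt hs hsp.le (fun _ _ => Nat.le_add_right _ _) n)
  · have hmul : linB p q s r (s * n) = linB p q s r n + r / ((s * n : ℕ) : ℝ) ^ logb s p := by
      simpa [linB] using cantorB_mul (p := p) (h := fun i => q * i + r) hs (by omega) (by omega)
    have hpos : (0 : ℝ) < ((s * n : ℕ) : ℝ) ^ logb s p :=
      Real.rpow_pos_of_pos (by norm_cast; nlinarith) _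
    rw [hmul]
    exact ⟨le_add_of_nonneg_right (by positivity),
      by rw [add_eq_left, div_eq_zero_iff, or_iff_left hpos.ne', Nat.cast_eq_zero]⟩
  · obtain ⟨m, hm, hsum⟩ := exists_sum_Icc_mul_pow_eq (s := s) (by omega) hℓk hεk
    have hdigit : ∀ e, s ^ (ℓ + 1) * m + e * s ^ ℓ + (s ^ ℓ - 1) =
        s ^ ℓ * (s * m + e) + (s ^ ℓ - 1) := fun e => by ring
    rw [hsum, hdigit, hdigit]
    exact linB_strictAntiOn_digit (r := r) hs (by omega) hsp ℓ hm (Set.mem_Iic.2 (by omega))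
      (Set.mem_Iic.2 (by omega)) h12
end

section
/- In the linear case h(i) = q·i + r (q ≥ 2, r ∈ {0,...,q-1}, p > q(s-1) + r, s ≥ 2): inf{b_n : n ≥ 1} = (q(s-1) + r)/(p-1) and sup{b_n : n ≥ 1} = (q(p-1) + p·r)/(p-1). Explicitly, b_{s^k} = (q(p-1)+pr)/(p-1) − r/((p-1)p^k) increases to the supremum, and b_{s^{k+1}-1} = ((q(s-1)+r)/(p-1)) · (p^{k+1}-1)/(s^{k+1}-1)^{log_s p} decreases to the infimum. -/
open Real Filter Set MeasureTheory Topology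
open scoped Classical ENNReal

/-!
Write `α = log_s p`, so that `s ^ α = p` and `α ≥ 1`. Reading off the last digit gives
`a (s m + e) = q e + r + p a m`, and `(s m) ^ α = p m ^ α`, so the recursion is compatible with
`n ↦ n ^ α` up to the error made by the last digit. Convexity of `t ↦ t ^ α`, in the form
"secant slopes increase when both endpoints move to the right", controls that error, and induction
on the number of digits gives `L ((n + 1) ^ α - 1) ≤ a n ≤ U n ^ α - r / (p - 1)` with `L`, `U` the
claimed infimum and supremum. Along `n = s ^ k` and `n = s ^ (k + 1) - 1` the digit strings are
constant, `a n` is a geometric sum, and `b n` tends to `U` and `L` respectively.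
-/

open Finset

section CantorInt

variable {p s : ℕ} {h : ℕ → ℕ}

@[simp]
lemma cantorInt_zero : cantorInt p s h 0 = 0 := by
  simp [cantorInt]

lemma cantorInt_of_pos (hs : 1 < s) {n : ℕ} (hn : 0 < n) :
    cantorInt p s h n = h (n % s) + p * cantorInt p s h (n / s) := by
  simp [cantorInt, Nat.digits_def' hs hn]

lemma cantorInt_base_mul_add (hs : 1 < s) {m e : ℕ} (he : e < s) (hme : 0 < s * m + e) :
    cantorInt p s h (s * m + e) = h e + p * cantorInt p s h m := by
  rw [cantorInt_of_pos hs hme, Nat.mul_add_mod, Nat.mod_eq_of_lt he, Nat.mul_add_div (by omega),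
    Nat.div_eq_of_lt he, add_zero]

lemma cantorInt_base_pow (hs : 1 < s) (k : ℕ) :
    cantorInt p s h (s ^ k) = h 0 * ∑ i ∈ range k, p ^ i + h 1 * p ^ k := by
  induction k with
  | zero => simp [cantorInt_of_pos hs one_pos, Nat.mod_eq_of_lt hs, Nat.div_eq_of_lt hs]
  | succ k ih =>
    rw [pow_succ', ← add_zero (s * s ^ k),
      cantorInt_base_mul_add hs (by omega) (by positivity), ih, geom_sum_succ]
    ring

lemma cantorInt_base_pow_sub_one (hs : 1 < s) (k : ℕ) :
    cantorInt p s h (s ^ k - 1) = h (s - 1) * ∑ i ∈ range k, p ^ i := by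
  induction k with
  | zero => simp
  | succ k ih =>
    have hsk : s ^ (k + 1) - 1 = s * (s ^ k - 1) + (s - 1) := by
      zify [Nat.one_le_pow k s (by omega), Nat.one_le_pow (k + 1) s (by omega), hs.le]
      ring
    rw [hsk, cantorInt_base_mul_add hs (by omega) (by omega), ih, geom_sum_succ]
    ring

end CantorInt

lemma ConvexOn.mul_sub_le_mul_sub {D : Set ℝ} {f : ℝ → ℝ} (hf : ConvexOn ℝ D f) {a b c d : ℝ}
    (ha : a ∈ D) (hb : b ∈ D) (hc : c ∈ D) (hd : d ∈ D)
    (hab : a < b) (hac : a ≤ c) (hbd : b ≤ d) (hcd : c ≤ d) :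
    (d - c) * (f b - f a) ≤ (b - a) * (f d - f c) := by
  rcases hcd.eq_or_lt with rfl | hcd
  · simp
  have hba : (f b - f a) / (b - a) ≤ (f d - f a) / (d - a) :=
    hf.secant_mono ha hb hd hab.ne' (by linarith) hbd
  have hdc : (f a - f d) / (a - d) ≤ (f c - f d) / (c - d) :=
    hf.secant_mono hd ha hc (by linarith) hcd.ne hac
  rw [← neg_div_neg_eq, neg_sub, neg_sub, ← neg_div_neg_eq (f c - f d), neg_sub, neg_sub] at hdc
  have := (div_le_div_iff₀ (by linarith) (by linarith)).1 (hba.trans hdc)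
  linarith

lemma rpow_mul_sub_le_mul_sub {α a b c d : ℝ} (hα : 1 ≤ α) (ha : 0 ≤ a)
    (hab : a < b) (hac : a ≤ c) (hbd : b ≤ d) (hcd : c ≤ d) :
    (d - c) * (b ^ α - a ^ α) ≤ (b - a) * (d ^ α - c ^ α) :=
  (convexOn_rpow hα).mul_sub_le_mul_sub ha (Set.mem_Ici.2 (by linarith))
    (Set.mem_Ici.2 (by linarith)) (Set.mem_Ici.2 (by linarith)) hab hac hbd hcd

lemma le_add_rpow_sub_rpow {α x e : ℝ} (hα : 1 ≤ α) (hx : 0 ≤ x) (he : 0 ≤ e)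
    (hxe : 1 ≤ x + e) : e ≤ (x + e) ^ α - x ^ α := by
  have := rpow_mul_sub_le_mul_sub hα le_rfl zero_lt_one hx hxe (by linarith : x ≤ x + e)
  simpa [Real.zero_rpow (by linarith : α ≠ 0)] using this

lemma monotoneOn_one_add_rpow_sub_rpow {α : ℝ} (hα : 1 ≤ α) :
    MonotoneOn (fun u : ℝ => (1 + u) ^ α - u ^ α) (Set.Ici 0) := by
  intro u hu v _ huv
  have := rpow_mul_sub_le_mul_sub hα hu (by linarith) huv (by linarith : 1 + u ≤ 1 + v)
    (by linarith : v ≤ 1 + v)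
  simpa using this

lemma tendsto_one_add_rpow_sub_rpow_nhds_zero {α : ℝ} (hα : 0 < α) :
    Tendsto (fun u : ℝ => (1 + u) ^ α - u ^ α) (𝓝 0) (𝓝 1) := by
  have hcont : Continuous (fun u : ℝ => (1 + u) ^ α - u ^ α) :=
    ((continuous_const.add continuous_id).rpow_const fun _ => Or.inr hα.le).sub
      (continuous_id.rpow_const fun _ => Or.inr hα.le)
  simpa [Real.zero_rpow hα.ne'] using hcont.tendsto 0

lemma one_le_logb_natCast {s p : ℕ} (hs : 1 < s) (hsp : s ≤ p) : 1 ≤ logb s p := by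
  rw [Real.le_logb_iff_rpow_le (by exact_mod_cast hs) (by norm_cast; omega), Real.rpow_one]
  exact_mod_cast hsp

lemma natCast_pow_rpow_logb {s p : ℕ} (hs : 1 < s) (hp : 0 < p) (k : ℕ) :
    ((s : ℝ) ^ k) ^ logb s p = (p : ℝ) ^ k := by
  rw [← Real.rpow_pow_comm (by positivity), Real.rpow_logb (by positivity)
    (by exact_mod_cast hs.ne') (by exact_mod_cast hp)]

noncomputable def linInf (p q s r : ℕ) : ℝ := ((q : ℝ) * ((s : ℝ) - 1) + r) / ((p : ℝ) - 1)

noncomputable def linSup (p q r : ℕ) : ℝ := ((q : ℝ) * ((p : ℝ) - 1) + (p : ℝ) * r) / ((p : ℝ) - 1)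

section Linear

variable {p q s r : ℕ}

lemma linInf_nonneg (hs : 1 < s) (hp : 1 < p) : 0 ≤ linInf p q s r := by
  have : (1 : ℝ) < s := by exact_mod_cast hs
  have : (1 : ℝ) < p := by exact_mod_cast hp
  unfold linInf
  positivity

lemma linInf_mul_le_cantorInt_add (hs : 1 < s) (hsp : s ≤ p) (n : ℕ) :
    linInf p q s r * ((n : ℝ) + 1) ^ logb s p ≤
      cantorInt p s (fun i => q * i + r) n + linInf p q s r := by
  set L := linInf p q s r
  set α := logb s p
  have hS : (1 : ℝ) < s := by exact_mod_cast hs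
  have hP : (1 : ℝ) < p := by exact_mod_cast hs.trans_le hsp
  have hα : 1 ≤ α := one_le_logb_natCast hs hsp
  have hL : 0 ≤ L := linInf_nonneg hs (hs.trans_le hsp)
  have hLp : L * ((p : ℝ) - 1) = q * ((s : ℝ) - 1) + r := div_mul_cancel₀ _ (by linarith)
  induction n using Nat.strong_induction_on with
  | _ n ih =>
  rcases n.eq_zero_or_pos with rfl | hn
  · simp
  have ihm := ih (n / s) (Nat.div_lt_self hn hs)
  have hn' : (n : ℝ) = s * (n / s : ℕ) + (n % s : ℕ) := by
    exact_mod_cast (Nat.div_add_mod n s).symm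
  have he : ((n % s : ℕ) : ℝ) + 1 ≤ s := by exact_mod_cast Nat.mod_lt n (by omega)
  rw [cantorInt_of_pos hs hn, hn']
  have hm0 : (0 : ℝ) ≤ (n / s : ℕ) := Nat.cast_nonneg _
  have he0 : (0 : ℝ) ≤ (n % s : ℕ) := Nat.cast_nonneg _
  push_cast at ihm he ⊢
  generalize ((n / s : ℕ) : ℝ) = m, ((n % s : ℕ) : ℝ) = e at ihm he hm0 he0 ⊢
  -- the slope of `t ^ α` on `[s m + e + 1, s m + s]` is at least its slope `(p - 1) / (s - 1)`
  -- on `[1, s]`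
  have hconv := rpow_mul_sub_le_mul_sub hα zero_le_one hS (by nlinarith : 1 ≤ s * m + e + 1)
    (by nlinarith : (s : ℝ) ≤ s * m + s) (by linarith : s * m + e + 1 ≤ s * m + s)
  rw [Real.one_rpow, Real.rpow_logb (by positivity) (by linarith) (by linarith),
    show (s : ℝ) * m + s = s * (m + 1) by ring, Real.mul_rpow (by positivity) (by positivity),
    Real.rpow_logb (by positivity) (by linarith) (by linarith)] at hconv
  generalize (cantorInt p s (fun i => q * i + r) (n / s) : ℝ) = A at ihm ⊢
  have hre := mul_nonneg (Nat.cast_nonneg r : (0 : ℝ) ≤ r) (by linarith : (0 : ℝ) ≤ s - 1 - e)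
  refine le_of_mul_le_mul_left ?_ (by linarith : (0 : ℝ) < s - 1)
  linear_combination mul_le_mul_of_nonneg_left hconv hL +
    mul_le_mul_of_nonneg_left ihm (by positivity : (0 : ℝ) ≤ p * (s - 1)) + hre + e * hLp

lemma cantorInt_add_le_linSup_mul (hs : 1 < s) (hsp : s ≤ p) {n : ℕ} (hn : 0 < n) :
    cantorInt p s (fun i => q * i + r) n + (r : ℝ) / ((p : ℝ) - 1) ≤
      linSup p q r * (n : ℝ) ^ logb s p := by
  set U := linSup p q r
  set c : ℝ := r / ((p : ℝ) - 1)
  set α := logb s p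
  have hS : (1 : ℝ) < s := by exact_mod_cast hs
  have hP : (1 : ℝ) < p := by exact_mod_cast hs.trans_le hsp
  have hα : 1 ≤ α := one_le_logb_natCast hs hsp
  have hP1 : (p : ℝ) - 1 ≠ 0 := by linarith
  have hc : 0 ≤ c := div_nonneg (Nat.cast_nonneg r) (by linarith)
  have hrc : (r : ℝ) + c = p * c := by
    simp only [c]; field_simp; ring
  have hU : U = q + p * c := by
    simp only [U, c, linSup]; field_simp
  induction n using Nat.strong_induction_on with
  | _ n ih =>
  rw [cantorInt_of_pos hs hn]
  push_cast
  rcases (n / s).eq_zero_or_pos with hm | hm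
  · have hns : n < s := by rwa [Nat.div_eq_zero_iff_lt (by omega)] at hm
    rw [hm, Nat.mod_eq_of_lt hns, cantorInt_zero]
    have hN1 : (1 : ℝ) ≤ n := by exact_mod_cast hn
    have hnN : (n : ℝ) ≤ (n : ℝ) ^ α := by
      simpa [Real.zero_rpow (by linarith : α ≠ 0)] using
        le_add_rpow_sub_rpow hα le_rfl (by linarith) (by linarith : (1 : ℝ) ≤ 0 + n)
    rw [hU]
    linear_combination mul_le_mul_of_nonneg_left hnN (Nat.cast_nonneg q) +
      mul_le_mul_of_nonneg_left (hN1.trans hnN) (by positivity : (0 : ℝ) ≤ p * c) + hrc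
  have ihm := ih (n / s) (Nat.div_lt_self hn hs) hm
  have hn' : (n : ℝ) = s * (n / s : ℕ) + (n % s : ℕ) := by
    exact_mod_cast (Nat.div_add_mod n s).symm
  have hm1 : (1 : ℝ) ≤ (n / s : ℕ) := by exact_mod_cast hm
  have he0 : (0 : ℝ) ≤ (n % s : ℕ) := Nat.cast_nonneg _
  rw [hn']
  generalize ((n / s : ℕ) : ℝ) = m, ((n % s : ℕ) : ℝ) = e at ihm hm1 he0 ⊢
  generalize (cantorInt p s (fun i => q * i + r) (n / s) : ℝ) = A at ihm ⊢
  have hincr := le_add_rpow_sub_rpow hα (by positivity : (0 : ℝ) ≤ s * m) he0 (by nlinarith)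
  have hsm : ((s : ℝ) * m) ^ α = p * m ^ α := by
    rw [Real.mul_rpow (by positivity) (by positivity),
      Real.rpow_logb (by positivity) (by linarith) (by linarith)]
  have hqU : (q : ℝ) * e ≤ U * e := mul_le_mul_of_nonneg_right (by rw [hU]; nlinarith) he0
  have hU0 : 0 ≤ U := by rw [hU]; positivity
  linear_combination (p : ℝ) * ihm + mul_le_mul_of_nonneg_left hincr hU0 + hqU + hrc - U * hsm

lemma linInf_le_linB (hs : 1 < s) (hsp : s ≤ p) {n : ℕ} (hn : 0 < n) :
    linInf p q s r ≤ linB p q s r n := by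
  have hN : (1 : ℝ) ≤ n := by exact_mod_cast hn
  have hstep : 1 ≤ ((n : ℝ) + 1) ^ logb s p - (n : ℝ) ^ logb s p :=
    le_add_rpow_sub_rpow (one_le_logb_natCast hs hsp) (by linarith) zero_le_one (by linarith)
  rw [linB, cantorB, le_div_iff₀ (by positivity)]
  linear_combination linInf_mul_le_cantorInt_add (q := q) (r := r) hs hsp n +
    mul_le_mul_of_nonneg_left hstep (linInf_nonneg hs (hs.trans_le hsp))

lemma linB_le_linSup (hs : 1 < s) (hsp : s ≤ p) {n : ℕ} (hn : 0 < n) :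
    linB p q s r n ≤ linSup p q r := by
  have hP : (1 : ℝ) < p := by exact_mod_cast hs.trans_le hsp
  have hc : 0 ≤ (r : ℝ) / ((p : ℝ) - 1) := div_nonneg (Nat.cast_nonneg r) (by linarith)
  rw [linB, cantorB, div_le_iff₀ (by positivity)]
  linarith [cantorInt_add_le_linSup_mul (q := q) (r := r) hs hsp hn]

lemma linB_base_pow (hs : 1 < s) (hsp : s ≤ p) (k : ℕ) :
    linB p q s r (s ^ k) = linSup p q r - r / ((p - 1) * p ^ k) := by
  have hP : (1 : ℝ) < p := by exact_mod_cast hs.trans_le hsp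
  have hP1 : (p : ℝ) - 1 ≠ 0 := by linarith
  rw [linB, cantorB, cantorInt_base_pow hs, Nat.cast_pow,
    natCast_pow_rpow_logb hs (by omega)]
  push_cast
  rw [geom_sum_eq hP.ne', linSup]
  field_simp
  ring

lemma linB_base_pow_succ_sub_one (hs : 1 < s) (hsp : s ≤ p) (k : ℕ) :
    linB p q s r (s ^ (k + 1) - 1) =
      linInf p q s r * ((p ^ (k + 1) - 1) / ((s : ℝ) ^ (k + 1) - 1) ^ logb s p) := by
  have hP : (1 : ℝ) < p := by exact_mod_cast hs.trans_le hsp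
  have hP1 : (p : ℝ) - 1 ≠ 0 := by linarith
  rw [linB, cantorB, cantorInt_base_pow_sub_one hs,
    Nat.cast_sub (Nat.one_le_pow _ _ (by omega))]
  push_cast [Nat.cast_sub hs.le]
  rw [geom_sum_eq hP.ne', linInf]
  field_simp

lemma monotone_linB_base_pow (hs : 1 < s) (hsp : s ≤ p) :
    Monotone fun k => linB p q s r (s ^ k) := by
  have hP : (1 : ℝ) < p := by exact_mod_cast hs.trans_le hsp
  refine monotone_nat_of_le_succ fun k => ?_
  simp only [linB_base_pow hs hsp]
  gcongr
  · linarith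
  · linarith

lemma tendsto_linB_base_pow (hs : 1 < s) (hsp : s ≤ p) :
    Tendsto (fun k => linB p q s r (s ^ k)) atTop (𝓝 (linSup p q r)) := by
  have hP : (1 : ℝ) < p := by exact_mod_cast hs.trans_le hsp
  have hden : Tendsto (fun k : ℕ => ((p : ℝ) - 1) * p ^ k) atTop atTop :=
    (tendsto_pow_atTop_atTop_of_one_lt hP).const_mul_atTop (by linarith)
  simp only [linB_base_pow hs hsp]
  simpa using tendsto_const_nhds.sub (tendsto_const_nhds.div_atTop hden)

lemma rpow_sub_one_div_sub_one_rpow {T α : ℝ} (hT : 1 < T) :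
    (T ^ α - 1) / (T - 1) ^ α = (1 + (T - 1)⁻¹) ^ α - ((T - 1)⁻¹) ^ α := by
  have hT1 : 0 < T - 1 := by linarith
  rw [show 1 + (T - 1)⁻¹ = T / (T - 1) by field_simp; ring, Real.div_rpow (by linarith) hT1.le,
    Real.inv_rpow hT1.le, sub_div, div_eq_mul_inv, one_div]

lemma linB_base_pow_succ_sub_one_eq (hs : 1 < s) (hsp : s ≤ p) (k : ℕ) :
    linB p q s r (s ^ (k + 1) - 1) = linInf p q s r *
      ((1 + ((s : ℝ) ^ (k + 1) - 1)⁻¹) ^ logb s p - (((s : ℝ) ^ (k + 1) - 1)⁻¹) ^ logb s p) := by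
  rw [linB_base_pow_succ_sub_one hs hsp, ← natCast_pow_rpow_logb hs (by omega),
    rpow_sub_one_div_sub_one_rpow (one_lt_pow₀ (by exact_mod_cast hs) (by omega))]

lemma antitone_linB_base_pow_succ_sub_one (hs : 1 < s) (hsp : s ≤ p) :
    Antitone fun k => linB p q s r (s ^ (k + 1) - 1) := by
  have hS : (1 : ℝ) < s := by exact_mod_cast hs
  intro j k hjk
  have hj : 0 < (s : ℝ) ^ (j + 1) - 1 := by linarith [one_lt_pow₀ hS (by omega : j + 1 ≠ 0)]
  have hpow : (s : ℝ) ^ (j + 1) ≤ s ^ (k + 1) := pow_le_pow_right₀ hS.le (by omega)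
  simp only [linB_base_pow_succ_sub_one_eq hs hsp]
  refine mul_le_mul_of_nonneg_left ?_ (linInf_nonneg hs (hs.trans_le hsp))
  exact monotoneOn_one_add_rpow_sub_rpow (one_le_logb_natCast hs hsp)
    (Set.mem_Ici.2 (inv_nonneg.2 (by linarith))) (Set.mem_Ici.2 (inv_nonneg.2 hj.le))
    (inv_anti₀ hj (by linarith))

lemma tendsto_linB_base_pow_succ_sub_one (hs : 1 < s) (hsp : s ≤ p) :
    Tendsto (fun k => linB p q s r (s ^ (k + 1) - 1)) atTop (𝓝 (linInf p q s r)) := by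
  have hS : (1 : ℝ) < s := by exact_mod_cast hs
  have hu : Tendsto (fun k : ℕ => ((s : ℝ) ^ (k + 1) - 1)⁻¹) atTop (𝓝 0) :=
    tendsto_inv_atTop_zero.comp (tendsto_atTop_add_const_right _ (-1)
      ((tendsto_pow_atTop_atTop_of_one_lt hS).comp (tendsto_add_atTop_nat 1)))
  have hα : 0 < logb s p := zero_lt_one.trans_le (one_le_logb_natCast hs hsp)
  simp only [linB_base_pow_succ_sub_one_eq hs hsp]
  simpa using ((tendsto_one_add_rpow_sub_rpow_nhds_zero hα).comp hu).const_mul (linInf p q s r)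

end Linear

theorem stmt19_general (p q s r : ℕ) (hs : 2 ≤ s) (hq : 2 ≤ q)
    (hp : q * (s - 1) + r < p) :
    sInf {x : ℝ | ∃ n : ℕ, 1 ≤ n ∧ linB p q s r n = x} =
      ((q : ℝ) * ((s : ℝ) - 1) + r) / ((p : ℝ) - 1) ∧
    sSup {x : ℝ | ∃ n : ℕ, 1 ≤ n ∧ linB p q s r n = x} =
      ((q : ℝ) * ((p : ℝ) - 1) + (p : ℝ) * r) / ((p : ℝ) - 1) ∧
    (∀ k : ℕ, linB p q s r (s ^ k) =
      ((q : ℝ) * ((p : ℝ) - 1) + (p : ℝ) * r) / ((p : ℝ) - 1) -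
        (r : ℝ) / (((p : ℝ) - 1) * (p : ℝ) ^ k)) ∧
    Monotone (fun k : ℕ => linB p q s r (s ^ k)) ∧
    Tendsto (fun k : ℕ => linB p q s r (s ^ k)) atTop
      (nhds (((q : ℝ) * ((p : ℝ) - 1) + (p : ℝ) * r) / ((p : ℝ) - 1))) ∧
    (∀ k : ℕ, linB p q s r (s ^ (k + 1) - 1) =
      (((q : ℝ) * ((s : ℝ) - 1) + r) / ((p : ℝ) - 1)) *
        (((p : ℝ) ^ (k + 1) - 1) / ((s : ℝ) ^ (k + 1) - 1) ^ Real.logb s p)) ∧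
    Antitone (fun k : ℕ => linB p q s r (s ^ (k + 1) - 1)) ∧
    Tendsto (fun k : ℕ => linB p q s r (s ^ (k + 1) - 1)) atTop
      (nhds (((q : ℝ) * ((s : ℝ) - 1) + r) / ((p : ℝ) - 1))) := by
  have hsp : s ≤ p := by
    have : s - 1 ≤ q * (s - 1) := Nat.le_mul_of_pos_left _ (by omega)
    omega
  set T := {x : ℝ | ∃ n : ℕ, 1 ≤ n ∧ linB p q s r n = x}
  have hmem : ∀ n, 1 ≤ n → linB p q s r n ∈ T := fun n hn => ⟨n, hn, rfl⟩
  refine ⟨?_, ?_, linB_base_pow hs hsp, monotone_linB_base_pow hs hsp,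
    tendsto_linB_base_pow hs hsp, linB_base_pow_succ_sub_one hs hsp,
    antitone_linB_base_pow_succ_sub_one hs hsp, tendsto_linB_base_pow_succ_sub_one hs hsp⟩
  · refine (isGLB_of_mem_closure ?_ (mem_closure_of_tendsto
      (tendsto_linB_base_pow_succ_sub_one hs hsp) (.of_forall fun k => hmem _ ?_))).csInf_eq
      ⟨_, hmem 1 le_rfl⟩
    · rintro _ ⟨n, hn, rfl⟩
      exact linInf_le_linB hs hsp hn
    · have : s ≤ s ^ (k + 1) := Nat.le_self_pow (by omega) s
      omega
  · refine (isLUB_of_mem_closure ?_ (mem_closure_of_tendsto (tendsto_linB_base_pow hs hsp)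
      (.of_forall fun k => hmem _ (Nat.one_le_pow _ _ (by omega))))).csSup_eq ⟨_, hmem 1 le_rfl⟩
    rintro _ ⟨n, hn, rfl⟩
    exact linB_le_linSup hs hsp hn

theorem stmt19 (p q s r : ℕ) (hs : 2 ≤ s) (hq : 2 ≤ q) (hr : r < q)
    (hp : q * (s - 1) + r < p) :
    sInf {x : ℝ | ∃ n : ℕ, 1 ≤ n ∧ linB p q s r n = x} =
      ((q : ℝ) * ((s : ℝ) - 1) + r) / ((p : ℝ) - 1) ∧
    sSup {x : ℝ | ∃ n : ℕ, 1 ≤ n ∧ linB p q s r n = x} =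
      ((q : ℝ) * ((p : ℝ) - 1) + (p : ℝ) * r) / ((p : ℝ) - 1) ∧
    (∀ k : ℕ, linB p q s r (s ^ k) =
      ((q : ℝ) * ((p : ℝ) - 1) + (p : ℝ) * r) / ((p : ℝ) - 1) -
        (r : ℝ) / (((p : ℝ) - 1) * (p : ℝ) ^ k)) ∧
    Monotone (fun k : ℕ => linB p q s r (s ^ k)) ∧
    Tendsto (fun k : ℕ => linB p q s r (s ^ k)) atTop
      (nhds (((q : ℝ) * ((p : ℝ) - 1) + (p : ℝ) * r) / ((p : ℝ) - 1))) ∧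
    (∀ k : ℕ, linB p q s r (s ^ (k + 1) - 1) =
      (((q : ℝ) * ((s : ℝ) - 1) + r) / ((p : ℝ) - 1)) *
        (((p : ℝ) ^ (k + 1) - 1) / ((s : ℝ) ^ (k + 1) - 1) ^ Real.logb s p)) ∧
    Antitone (fun k : ℕ => linB p q s r (s ^ (k + 1) - 1)) ∧
    Tendsto (fun k : ℕ => linB p q s r (s ^ (k + 1) - 1)) atTop
      (nhds (((q : ℝ) * ((s : ℝ) - 1) + r) / ((p : ℝ) - 1))) :=
  stmt19_general p q s r hs hq hp
end
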